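/- If A ⊆ ℕ has asymptotic density and A ∩ B = ∅, then d̲̲(A ∪ B) = d(A) + d̲̲(B). -/

import Mathlib

/-!
Adding `B' ⊆ B` of density `y` to `A` gives a subset of `A ∪ B` of density `a + y`. Conversely,
if `C ⊆ A ∪ B` has density `x > a`, then `C \ A ⊆ B` gains at least `(x - a)(n - m) - o(n)`
elements on every window `(m, n]`, and a greedy choice inside `C \ A` (take an element unless the
count would exceed `(x - a) n`) produces a subset of exact density `x - a`: every time it has to
skip an element its count is full, and after the last skip it has taken every element.
-/

open Filter

/-- `cnt A n` = number of elements of `A` in `[1, n]`, as a real number. -/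
noncomputable def cnt (A : Set ℕ) (n : ℕ) : ℝ :=
  ∑ k ∈ Finset.Icc 1 n, A.indicator (fun _ => (1 : ℝ)) k

/-- `A` has asymptotic density `x`. -/
def HasDens (A : Set ℕ) (x : ℝ) : Prop :=
  Filter.Tendsto (fun n => cnt A n / n) Filter.atTop (nhds x)

/-- `lld A` = sup of densities of subsets of `A` having asymptotic density. -/
noncomputable def lld (A : Set ℕ) : ℝ := sSup {x : ℝ | ∃ B ⊆ A, HasDens B x}

/-- `uud A` = inf of densities of supersets of `A` having asymptotic density. -/
noncomputable def uud (A : Set ℕ) : ℝ := sInf {x : ℝ | ∃ C : Set ℕ, A ⊆ C ∧ HasDens C x}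

section Counting

variable {X Y : Set ℕ}

lemma cnt_succ (X : Set ℕ) (n : ℕ) :
    cnt X (n + 1) = cnt X n + X.indicator (fun _ => (1 : ℝ)) (n + 1) := by
  rw [cnt, cnt, Finset.sum_Icc_succ_top (Nat.le_add_left 1 n)]

lemma cnt_nonneg (X : Set ℕ) (n : ℕ) : 0 ≤ cnt X n :=
  Finset.sum_nonneg fun _ _ => Set.indicator_nonneg (fun _ _ => zero_le_one) _

lemma cnt_le (X : Set ℕ) (n : ℕ) : cnt X n ≤ n := by
  calc cnt X n ≤ (Finset.Icc 1 n).card • (1 : ℝ) :=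
        Finset.sum_le_card_nsmul _ _ _ fun _ _ =>
          Set.indicator_le_self' (fun _ _ => zero_le_one) _
    _ = n := by simp

lemma cnt_mono (X : Set ℕ) : Monotone (cnt X) := fun _ _ hmn =>
  Finset.sum_le_sum_of_subset_of_nonneg (Finset.Icc_subset_Icc_right hmn)
    fun _ _ _ => Set.indicator_nonneg (fun _ _ => zero_le_one) _

lemma cnt_union (h : Disjoint X Y) (n : ℕ) : cnt (X ∪ Y) n = cnt X n + cnt Y n := by
  simp only [cnt, Set.indicator_union_of_disjoint h, Finset.sum_add_distrib]

lemma cnt_sub_cnt_le_of_subset (hXY : X ⊆ Y) {m n : ℕ} (hmn : m ≤ n) :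
    cnt X n - cnt X m ≤ cnt Y n - cnt Y m := by
  have hsplit (k : ℕ) : cnt Y k = cnt X k + cnt (Y \ X) k := by
    rw [← cnt_union Set.disjoint_sdiff_right, Set.union_sdiff_cancel hXY]
  linarith [hsplit m, hsplit n, cnt_mono (Y \ X) hmn]

end Counting

section Density

variable {X Y : Set ℕ} {x y : ℝ}

lemma hasDens_empty : HasDens ∅ 0 := by
  simp [HasDens, cnt]

lemma HasDens.le_one (h : HasDens X x) : x ≤ 1 :=
  le_of_tendsto h (Eventually.of_forall fun n => div_le_one_of_le₀ (cnt_le X n) n.cast_nonneg)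

lemma HasDens.union (h : Disjoint X Y) (hX : HasDens X x) (hY : HasDens Y y) :
    HasDens (X ∪ Y) (x + y) := by
  simpa only [HasDens, cnt_union h, add_div] using hX.add hY

lemma HasDens.eventually_abs_sub_le (h : HasDens X x) {ε : ℝ} (hε : 0 < ε) :
    ∀ᶠ n : ℕ in atTop, |cnt X n - x * n| ≤ ε * n := by
  filter_upwards [h.eventually (Metric.closedBall_mem_nhds x hε), eventually_gt_atTop 0]
    with n hn hn0
  have hn0' : (0 : ℝ) < n := by exact_mod_cast hn0
  rw [Real.dist_eq] at hn
  calc |cnt X n - x * n| = |cnt X n / n - x| * n := by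
        rw [← abs_of_pos hn0', ← abs_mul, abs_of_pos hn0', sub_mul, div_mul_cancel₀ _ hn0'.ne']
    _ ≤ ε * n := by gcongr

lemma le_lld (hYX : Y ⊆ X) (hY : HasDens Y y) : y ≤ lld X :=
  le_csSup ⟨1, fun _ ⟨_, _, h⟩ => h.le_one⟩ ⟨Y, hYX, hY⟩

lemma lld_le {c : ℝ} (h : ∀ Y ⊆ X, ∀ y, HasDens Y y → y ≤ c) : lld X ≤ c :=
  csSup_le ⟨0, ∅, Set.empty_subset X, hasDens_empty⟩ fun y ⟨Y, hYX, hY⟩ => h Y hYX y hY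

lemma lld_nonneg (X : Set ℕ) : 0 ≤ lld X :=
  le_lld (Set.empty_subset X) hasDens_empty

end Density

/-- The error is `ε n` rather than `ε (n - m)`, so this is weaker than a lower bound on the
lower Banach density; it is what a difference of two sets with densities satisfies. -/
def WindowLowerBound (D : Set ℕ) (s : ℝ) : Prop :=
  ∀ ε > 0, ∀ᶠ m : ℕ in atTop, ∀ n ≥ m, s * (n - m) - ε * n ≤ cnt D n - cnt D m

lemma HasDens.windowLowerBound_diff {C A : Set ℕ} {x a : ℝ} (hC : HasDens C x)
    (hA : HasDens A a) : WindowLowerBound (C \ A) (x - a) := by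
  intro ε hε
  obtain ⟨N, hN⟩ := eventually_atTop.1 <|
    (hC.eventually_abs_sub_le (by positivity : 0 < ε / 4)).and
      (hA.eventually_abs_sub_le (by positivity : 0 < ε / 4))
  filter_upwards [eventually_ge_atTop N] with m hm n hmn
  obtain ⟨hCm, hAm⟩ := hN m hm
  obtain ⟨hCn, hAn⟩ := hN n (hm.trans hmn)
  rw [abs_le] at hCm hAm hCn hAn
  have hsplit (k : ℕ) : cnt C k = cnt (C ∩ A) k + cnt (C \ A) k := by
    rw [← cnt_union (Set.disjoint_sdiff_inter.symm), Set.inter_union_sdiff]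
  have hCA := cnt_sub_cnt_le_of_subset (Set.inter_subset_right : C ∩ A ⊆ A) hmn
  have hεmn : ε / 4 * m ≤ ε / 4 * n := by gcongr
  linarith [hsplit m, hsplit n, hCm.1, hAm.2, hCn.2, hAn.1]

open Classical in
noncomputable def greedyCount (t : ℝ) (D : Set ℕ) : ℕ → ℕ
  | 0 => 0
  | n + 1 =>
    if n + 1 ∈ D ∧ (greedyCount t D n : ℝ) + 1 ≤ t * (n + 1) then greedyCount t D n + 1
    else greedyCount t D n

def greedySet (t : ℝ) (D : Set ℕ) : Set ℕ :=
  {n | n ∈ D ∧ (greedyCount t D (n - 1) : ℝ) + 1 ≤ t * n}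

section Greedy

variable {t : ℝ} {D : Set ℕ}

lemma greedySet_subset : greedySet t D ⊆ D := fun _ hn => hn.1

lemma cnt_greedySet (n : ℕ) : cnt (greedySet t D) n = greedyCount t D n := by
  induction n with
  | zero => simp [cnt, greedyCount]
  | succ n ih =>
    have hmem : n + 1 ∈ greedySet t D ↔
        n + 1 ∈ D ∧ (greedyCount t D n : ℝ) + 1 ≤ t * (n + 1) := by
      simp [greedySet]
    by_cases h : n + 1 ∈ greedySet t D
    · simp [cnt_succ, ih, greedyCount, h, hmem.1 h]
    · simp [cnt_succ, ih, greedyCount, h, mt hmem.2 h]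

lemma mem_greedySet_iff {n : ℕ} :
    n + 1 ∈ greedySet t D ↔ n + 1 ∈ D ∧ cnt (greedySet t D) n + 1 ≤ t * (n + 1) := by
  rw [cnt_greedySet]
  simp [greedySet]

lemma cnt_greedySet_le (ht : 0 ≤ t) (n : ℕ) : cnt (greedySet t D) n ≤ t * n := by
  induction n with
  | zero => simp [cnt]
  | succ n ih =>
    rw [cnt_succ]
    by_cases h : n + 1 ∈ greedySet t D
    · simpa [h] using (mem_greedySet_iff.1 h).2
    · simp only [h, not_false_eq_true, Set.indicator_of_notMem, add_zero, Nat.cast_succ]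
      nlinarith

lemma exists_le_cnt_greedySet (ht : 0 ≤ t) {m n : ℕ} (hmn : m ≤ n) :
    ∃ k, m ≤ k ∧ k ≤ n ∧ t * (k - m) - 1 + (cnt D n - cnt D k) ≤ cnt (greedySet t D) n := by
  induction n, hmn using Nat.le_induction with
  | base => exact ⟨m, le_rfl, le_rfl, by linarith [cnt_nonneg (greedySet t D) m]⟩
  | succ n hmn ih =>
    obtain ⟨k, hmk, hkn, hk⟩ := ih
    by_cases hskip : n + 1 ∈ D ∧ n + 1 ∉ greedySet t D
    · have hfull : t * (n + 1) < cnt (greedySet t D) n + 1 := by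
        simpa [mem_greedySet_iff, hskip.1] using hskip.2
      refine ⟨n + 1, by omega, le_rfl, ?_⟩
      simp only [cnt_succ, hskip.2, not_false_eq_true, Set.indicator_of_notMem]
      push_cast
      nlinarith [(Nat.cast_nonneg m : (0 : ℝ) ≤ m)]
    · have hind : (greedySet t D).indicator (fun _ => (1 : ℝ)) (n + 1)
          = D.indicator (fun _ => (1 : ℝ)) (n + 1) := by
        by_cases hD : n + 1 ∈ D
        · simp [hD, show n + 1 ∈ greedySet t D by tauto]
        · simp [hD, show n + 1 ∉ greedySet t D from fun h => hD (greedySet_subset h)]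
      refine ⟨k, hmk, hkn.trans n.le_succ, ?_⟩
      rw [cnt_succ, cnt_succ, hind]
      linarith

lemma hasDens_greedySet (ht : 0 ≤ t) (hD : WindowLowerBound D t) :
    HasDens (greedySet t D) t := by
  refine tendsto_order.2 ⟨fun c hc => ?_, fun c hc => ?_⟩
  · obtain ⟨m, hm⟩ := eventually_atTop.1 (hD ((t - c) / 2) (by linarith))
    have hsmall : ∀ᶠ n : ℕ in atTop, (t * m + 1) / n < (t - c) / 2 :=
      (tendsto_const_div_atTop_nhds_zero_nat _).eventually (gt_mem_nhds (by linarith))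
    filter_upwards [hsmall, eventually_ge_atTop m, eventually_gt_atTop 0] with n hn hmn hn0
    obtain ⟨k, hmk, hkn, hk⟩ := exists_le_cnt_greedySet (D := D) ht hmn
    have hwin := hm k hmk n hkn
    have hn0' : (0 : ℝ) < n := by exact_mod_cast hn0
    rw [div_lt_iff₀ hn0'] at hn
    rw [lt_div_iff₀ hn0']
    nlinarith
  · filter_upwards [eventually_gt_atTop 0] with n hn0
    have hn0' : (0 : ℝ) < n := by exact_mod_cast hn0
    rw [div_lt_iff₀ hn0']
    nlinarith [cnt_greedySet_le (D := D) ht n]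

end Greedy

lemma lld_union_le {A B : Set ℕ} {a : ℝ} (hA : HasDens A a) : lld (A ∪ B) ≤ a + lld B := by
  refine lld_le fun C hC x hCx => ?_
  rcases le_total x a with hxa | hax
  · linarith [lld_nonneg B]
  · have hsub : greedySet (x - a) (C \ A) ⊆ B := fun n hn => by
      obtain ⟨hnC, hnA⟩ := greedySet_subset hn
      exact (hC hnC).resolve_left hnA
    linarith [le_lld hsub (hasDens_greedySet (sub_nonneg.2 hax) (hCx.windowLowerBound_diff hA))]

lemma add_lld_le_lld_union {A B : Set ℕ} {a : ℝ} (hA : HasDens A a) (hAB : Disjoint A B) :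
    a + lld B ≤ lld (A ∪ B) := by
  rw [← le_sub_iff_add_le']
  refine lld_le fun B' hB' y hB'y => le_sub_iff_add_le'.2 ?_
  exact le_lld (Set.union_subset_union_right A hB') (hA.union (hAB.mono_right hB') hB'y)

theorem stmt_13 (A B : Set ℕ) (a : ℝ) (hA : HasDens A a) (hdisj : A ∩ B = ∅) :
    lld (A ∪ B) = a + lld B :=
  (lld_union_le hA).antisymm
    (add_lld_le_lld_union hA (Set.disjoint_iff_inter_eq_empty.2 hdisj))
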